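/- arXiv:2605.01464 — 13 statements merged into one kernel-verified Lean document; each statement's English description precedes it below -/
import Mathlib

section
/- Let A be an m×n matrix over the real quaternions and let A† be an n×m quaternion matrix satisfying the four Penrose equations AA†A = A, A†AA† = A†, (AA†)ᴴ = AA†, (A†A)ᴴ = A†A. Fix an integer k ≥ 1 and a real scalar α, and define the hyperpower sequence X₀ = α • Aᴴ, X_{j+1} = X_j · (∑_{s=0}^{k−1} (I − A·X_j)^s). Then for every j ≥ 0 one has X_j · A · A† = X_j. -/
open Matrix Finset

/-- For the quaternion hyperpower iteration of order `k ≥ 1` started at `X₀ = α • Aᴴ`,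
every iterate satisfies `X j * A * A† = X j`, where `A†` satisfies the four Penrose
equations. -/
theorem qhpim_mul_pinv_right_invariant
    {m n : ℕ} (A : Matrix (Fin m) (Fin n) (Quaternion ℝ))
    (Adag : Matrix (Fin n) (Fin m) (Quaternion ℝ))
    (h1 : A * Adag * A = A) (h2 : Adag * A * Adag = Adag)
    (h3 : (A * Adag)ᴴ = A * Adag) (h4 : (Adag * A)ᴴ = Adag * A)
    (k : ℕ) (hk : 1 ≤ k) (α : ℝ)
    (X : ℕ → Matrix (Fin n) (Fin m) (Quaternion ℝ))
    (hX0 : X 0 = α • Aᴴ)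
    (hX : ∀ j, X (j + 1) = X j * ∑ s ∈ Finset.range k, (1 - A * X j) ^ s) :
    ∀ j, X j * A * Adag = X j := by
  intro j
  induction j with
  | zero =>
      rw [hX0]
      have key : Aᴴ * A * Adag = Aᴴ := by
        calc Aᴴ * A * Adag = Aᴴ * (A * Adag)ᴴ := by rw [h3, Matrix.mul_assoc]
          _ = (A * Adag * A)ᴴ := by simp [conjTranspose_mul, Matrix.mul_assoc]
          _ = Aᴴ := by rw [h1]
      rw [Matrix.smul_mul, Matrix.smul_mul, key]
  | succ j ih =>
      have h5 : X j * (1 - A * Adag) = 0 := by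
        rw [Matrix.mul_sub, Matrix.mul_one, ← Matrix.mul_assoc, ih, sub_self]
      have hYP : (1 - A * X j) * (1 - A * Adag) = 1 - A * Adag := by
        have hy : A * X j * (A * Adag) = A * X j := by
          rw [Matrix.mul_assoc, ← Matrix.mul_assoc (X j), ih]
        rw [Matrix.sub_mul, Matrix.one_mul, Matrix.mul_sub, Matrix.mul_one, hy]
        abel
      have hpow : ∀ s : ℕ, (1 - A * X j) ^ s * (1 - A * Adag) = 1 - A * Adag := by
        intro s
        induction s with
        | zero => simp
        | succ s ihs => rw [pow_succ, Matrix.mul_assoc, hYP, ihs]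
      have hsum : (∑ s ∈ Finset.range k, (1 - A * X j) ^ s) * (1 - A * Adag)
          = (k : ℕ) • (1 - A * Adag) := by
        rw [Finset.sum_mul]
        simp only [hpow]
        rw [Finset.sum_const, Finset.card_range]
      have hz : X (j + 1) * (1 - A * Adag) = 0 := by
        rw [hX j, Matrix.mul_assoc, hsum, Matrix.mul_smul, h5, smul_zero]
      rw [Matrix.mul_sub, Matrix.mul_one, ← Matrix.mul_assoc, sub_eq_zero] at hz
      exact hz.symm
end

section
/- Let A be an m×n matrix over the real quaternions, fix an integer k ≥ 1 and a real scalar α, and define the hyperpower sequence X₀ = α • Aᴴ, X_{j+1} = X_j · (∑_{s=0}^{k−1} (I − A·X_j)^s). Then for every j ≥ 0 the product A·X_j is Hermitian: (A·X_j)ᴴ = A·X_j. -/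
open Matrix Finset

instance : StarModule ℝ (Quaternion ℝ) :=
  ⟨fun r q => by ext <;> simp⟩

/-- For the quaternion hyperpower iteration of order `k ≥ 1` started at `X₀ = α • Aᴴ`,
the product `A * X j` is Hermitian at every iteration. -/
theorem qhpim_A_mul_X_hermitian
    {m n : ℕ} (A : Matrix (Fin m) (Fin n) (Quaternion ℝ))
    (k : ℕ) (hk : 1 ≤ k) (α : ℝ)
    (X : ℕ → Matrix (Fin n) (Fin m) (Quaternion ℝ))
    (hX0 : X 0 = α • Aᴴ)
    (hX : ∀ j, X (j + 1) = X j * ∑ s ∈ Finset.range k, (1 - A * X j) ^ s) :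
    ∀ j, (A * X j)ᴴ = A * X j := by
  intro j
  induction j with
  | zero =>
    rw [hX0, Matrix.mul_smul, conjTranspose_smul, conjTranspose_mul,
      conjTranspose_conjTranspose, star_trivial]
  | succ j ih =>
    rw [hX j, ← Matrix.mul_assoc, conjTranspose_mul, conjTranspose_sum]
    have hpow : ∀ s : ℕ, ((1 - A * X j) ^ s)ᴴ = (1 - A * X j) ^ s := by
      intro s
      rw [conjTranspose_pow, conjTranspose_sub, conjTranspose_one, ih]
    simp_rw [hpow]
    have hcomm : Commute (A * X j) (∑ s ∈ Finset.range k, (1 - A * X j) ^ s) := by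
      apply Commute.sum_right
      intro s _
      exact ((Commute.one_right (A * X j)).sub_right (Commute.refl _)).pow_right s
    rw [ih, ← hcomm.eq]
end

section
/- Let A be an m×n matrix over the real quaternions, fix an integer k ≥ 1 and a real scalar α, and define the hyperpower sequence X₀ = α • Aᴴ, X_{j+1} = X_j · (∑_{s=0}^{k−1} (I − A·X_j)^s). Then for every j ≥ 0 the product X_j·A is Hermitian: (X_j·A)ᴴ = X_j·A. -/
open Matrix Finset

instance inst_s3 : StarModule ℝ (Quaternion ℝ) :=
  ⟨fun r a => by simp [Quaternion.star_smul]⟩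

lemma qhpim_shift {m n : ℕ} (A : Matrix (Fin m) (Fin n) (Quaternion ℝ))
    (Y : Matrix (Fin n) (Fin m) (Quaternion ℝ)) (s : ℕ) :
    (1 - A * Y) ^ s * A = A * (1 - Y * A) ^ s := by
  induction s with
  | zero => simp
  | succ s ih =>
    have h1 : (1 - A * Y) * A = A * (1 - Y * A) := by
      rw [Matrix.sub_mul, Matrix.mul_sub, Matrix.one_mul, Matrix.mul_one, Matrix.mul_assoc]
    rw [pow_succ, pow_succ, Matrix.mul_assoc, h1, ← Matrix.mul_assoc, ih, Matrix.mul_assoc]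

/-- For the quaternion hyperpower iteration of order `k ≥ 1` started at `X₀ = α • Aᴴ`,
the product `X j * A` is Hermitian at every iteration. -/
theorem qhpim_X_mul_A_hermitian
    {m n : ℕ} (A : Matrix (Fin m) (Fin n) (Quaternion ℝ))
    (k : ℕ) (hk : 1 ≤ k) (α : ℝ)
    (X : ℕ → Matrix (Fin n) (Fin m) (Quaternion ℝ))
    (hX0 : X 0 = α • Aᴴ)
    (hX : ∀ j, X (j + 1) = X j * ∑ s ∈ Finset.range k, (1 - A * X j) ^ s) :
    ∀ j, (X j * A)ᴴ = X j * A := by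
  intro j
  induction j with
  | zero =>
    rw [hX0, Matrix.smul_mul, Matrix.conjTranspose_smul, Matrix.conjTranspose_mul,
      Matrix.conjTranspose_conjTranspose, star_trivial]
  | succ j ih =>
    have key : X (j + 1) * A = (X j * A) * ∑ s ∈ Finset.range k, (1 - X j * A) ^ s := by
      rw [hX j, Matrix.mul_assoc, Matrix.sum_mul, Matrix.mul_sum, Matrix.mul_sum]
      refine Finset.sum_congr rfl fun s _ => ?_
      rw [qhpim_shift A (X j) s, ← Matrix.mul_assoc]
    have hcomm : ∀ s : ℕ, (1 - X j * A) ^ s * (X j * A) = (X j * A) * (1 - X j * A) ^ s :=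
      fun s => (((Commute.one_left (X j * A)).sub_left (Commute.refl _)).pow_left s).eq
    rw [key, Matrix.conjTranspose_mul, Matrix.conjTranspose_sum]
    have hterm : ∀ s ∈ Finset.range k, ((1 - X j * A) ^ s)ᴴ = (1 - X j * A) ^ s := by
      intro s _
      rw [Matrix.conjTranspose_pow, Matrix.conjTranspose_sub, Matrix.conjTranspose_one, ih]
    rw [Finset.sum_congr rfl hterm, ih, Matrix.sum_mul, Matrix.mul_sum]
    exact Finset.sum_congr rfl fun s _ => hcomm s
end

section
/- Let A be an m×n matrix over the real quaternions, let A† be an n×m quaternion matrix satisfying the four Penrose equations, and let X be an n×m quaternion matrix satisfying both A†·A·X = X and X·A·A† = X. Fix an integer k ≥ 1 and set X' = X · (∑_{s=0}^{k−1} (I − A·X)^s). Then the error propagation identity A·(X' − A†) = (−1)^{k+1} · (A·(X − A†))^k holds. (For k = 10 this is the identity A E_{j+1} = −(A E_j)^{10} underlying the tenth-order convergence of the QSAI method; for k = 19 it underlies the nineteenth-order convergence of QHPI19.) -/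
open Matrix Finset

lemma qhpim_aux {R : Type*} [Ring R] (e q : R) (he : e * e = e)
    (h1 : e * q = 0) (h2 : q * e = 0) :
    ∀ k : ℕ, 1 ≤ k → (e + q) ^ k = e + q ^ k := by
  intro k hk
  induction k with
  | zero => omega
  | succ k ih =>
    rcases Nat.eq_or_lt_of_le hk with h | h
    · simp [← h]
    · have hk1 : 1 ≤ k := Nat.lt_succ_iff.mp h
      have hqk : q ^ k * e = 0 := by
        obtain ⟨j, rfl⟩ := Nat.exists_eq_add_of_le hk1
        rw [add_comm, pow_add, pow_one, mul_assoc, h2, mul_zero]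
      rw [pow_succ, ih hk1, add_mul, mul_add, mul_add, he, h1, hqk, ← pow_succ]
      abel

lemma qhpim_key {R : Type*} [Ring R] (p b : R) (hpp : p * p = p)
    (hpb : p * b = b) (hbp : b * p = b) (k : ℕ) (hk : 1 ≤ k) :
    b * (∑ s ∈ Finset.range k, (1 - b) ^ s) - p = -(p - b) ^ k := by
  have hcomm : ∀ s : ℕ, Commute b ((1 - b) ^ s) := fun s =>
    ((Commute.one_right b).sub_right (Commute.refl b)).pow_right s
  have hgeom : b * (∑ s ∈ Finset.range k, (1 - b) ^ s) = 1 - (1 - b) ^ k := by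
    rw [Finset.mul_sum]
    rw [Finset.sum_congr rfl (fun s _ => (hcomm s).eq), ← Finset.sum_mul]
    have h' := geom_sum_mul (1 - b) k
    have hsb : (1 - b) - 1 = -b := by abel
    rw [hsb, mul_neg] at h'
    rw [← neg_sub ((1 - b) ^ k) 1, ← h', neg_neg]
  have e1 : (1 - p) * (1 - p) = 1 - p := by
    rw [sub_mul, mul_sub, mul_sub, hpp, one_mul, mul_one, one_mul]; abel
  have e2 : (1 - p) * (p - b) = 0 := by
    rw [sub_mul, mul_sub p, hpp, hpb, one_mul]; abel
  have e3 : (p - b) * (1 - p) = 0 := by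
    rw [sub_mul, mul_sub, mul_sub, hpp, hbp, mul_one, mul_one]; abel
  have hdecomp : (1 - b) ^ k = (1 - p) + (p - b) ^ k := by
    have hs : (1 : R) - b = (1 - p) + (p - b) := by abel
    rw [hs, qhpim_aux (1 - p) (p - b) e1 e2 e3 k hk]
  rw [hgeom, hdecomp]; abel

/-- Error-propagation identity for one step of the order-`k` hyperpower iteration:
if `A† * A * X = X` and `X * A * A† = X`, then
`A·(X' − A†) = (−1)^{k+1} • (A·(X − A†))^k`. -/
theorem qhpim_error_propagation
    {m n : ℕ} (A : Matrix (Fin m) (Fin n) (Quaternion ℝ))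
    (Adag : Matrix (Fin n) (Fin m) (Quaternion ℝ))
    (h1 : A * Adag * A = A) (h2 : Adag * A * Adag = Adag)
    (h3 : (A * Adag)ᴴ = A * Adag) (h4 : (Adag * A)ᴴ = Adag * A)
    (X : Matrix (Fin n) (Fin m) (Quaternion ℝ))
    (hXl : Adag * A * X = X) (hXr : X * A * Adag = X)
    (k : ℕ) (hk : 1 ≤ k)
    (X' : Matrix (Fin n) (Fin m) (Quaternion ℝ))
    (hX' : X' = X * ∑ s ∈ Finset.range k, (1 - A * X) ^ s) :
    A * (X' - Adag) = (-1 : ℝ) ^ (k + 1) • (A * (X - Adag)) ^ k := by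
  subst hX'
  have hPP : (A * Adag) * (A * Adag) = A * Adag := by
    rw [← Matrix.mul_assoc, h1]
  have hPB : (A * Adag) * (A * X) = A * X := by
    rw [← Matrix.mul_assoc, h1]
  have hBP : (A * X) * (A * Adag) = A * X := by
    rw [Matrix.mul_assoc A X (A * Adag), ← Matrix.mul_assoc X A Adag, hXr]
  have lhs : A * (X * (∑ s ∈ Finset.range k, (1 - A * X) ^ s) - Adag)
      = -((A * Adag) - (A * X)) ^ k := by
    rw [Matrix.mul_sub, ← Matrix.mul_assoc]
    exact qhpim_key (A * Adag) (A * X) hPP hPB hBP k hk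
  rw [lhs]
  have hnp : (A * (X - Adag)) ^ k
      = (-1 : ℝ) ^ k • ((A * Adag) - (A * X)) ^ k := by
    have h5 : A * (X - Adag) = (-1 : ℝ) • ((A * Adag) - (A * X)) := by
      rw [Matrix.mul_sub, neg_one_smul, neg_sub]
    rw [h5, smul_pow]
  rw [hnp, smul_smul, ← pow_add]
  have hodd : Odd (k + 1 + k) := ⟨k, by ring⟩
  rw [hodd.neg_one_pow, neg_one_smul]
end

section
/- (Theorem 3.7, order bound for QSAI.) Let A be an m×n matrix over the real quaternions and let A† be an n×m quaternion matrix satisfying the four Penrose equations. Fix a real scalar α and define the order-10 hyperpower sequence X₀ = α • Aᴴ, X_{j+1} = X_j · (∑_{s=0}^{9} (I − A·X_j)^s). Then, with respect to the L∞ operator norm on quaternion matrices, for every j ≥ 0 one has ‖X_{j+1} − A†‖ ≤ ‖A†‖ · ‖A‖^{10} · ‖X_j − A†‖^{10}. -/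
open Matrix Finset Quaternion

attribute [local instance] Matrix.linftyOpNormedAddCommGroup

set_option maxHeartbeats 1000000 in
/-- Theorem 3.7 (order bound for QSAI): the order-10 hyperpower iterates satisfy
`‖X_{j+1} − A†‖ ≤ ‖A†‖·‖A‖^10·‖X_j − A†‖^10` in the L∞ operator norm. -/
theorem qsai_order_bound
    {m n : ℕ} (A : Matrix (Fin m) (Fin n) (Quaternion ℝ))
    (Adag : Matrix (Fin n) (Fin m) (Quaternion ℝ))
    (h1 : A * Adag * A = A) (h2 : Adag * A * Adag = Adag)
    (h3 : (A * Adag)ᴴ = A * Adag) (h4 : (Adag * A)ᴴ = Adag * A)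
    (α : ℝ)
    (X : ℕ → Matrix (Fin n) (Fin m) (Quaternion ℝ))
    (hX0 : X 0 = α • Aᴴ)
    (hX : ∀ j, X (j + 1) = X j * ∑ s ∈ Finset.range 10, (1 - A * X j) ^ s) :
    ∀ j, ‖X (j + 1) - Adag‖ ≤ ‖Adag‖ * ‖A‖ ^ 10 * ‖X j - Adag‖ ^ 10 := by
  -- two basic facts about Aᴴ
  have hAH1 : Adag * A * Aᴴ = Aᴴ := by
    conv_lhs => rw [← h4]
    rw [← conjTranspose_mul, ← Matrix.mul_assoc, h1]
  have hAH2 : Aᴴ * (A * Adag) = Aᴴ := by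
    conv_lhs => rw [← h3]
    rw [← conjTranspose_mul, h1]
  -- swap identity
  have hstep : ∀ j, X j * (1 - A * X j) = (1 - X j * A) * X j := by
    intro j
    rw [Matrix.mul_sub, Matrix.sub_mul, Matrix.mul_one, Matrix.one_mul, Matrix.mul_assoc]
  have hswap : ∀ j s, X j * (1 - A * X j) ^ s = (1 - X j * A) ^ s * X j := by
    intro j s
    induction s with
    | zero => simp
    | succ s ih =>
      rw [pow_succ, ← Matrix.mul_assoc, ih, Matrix.mul_assoc, hstep j,
        ← Matrix.mul_assoc, ← pow_succ]
  -- alternative form of the iteration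
  have halt : ∀ j, X (j + 1) = (∑ s ∈ Finset.range 10, (1 - X j * A) ^ s) * X j := by
    intro j
    rw [hX, Matrix.mul_sum, Matrix.sum_mul]
    exact Finset.sum_congr rfl fun s _ => hswap j s
  -- left invariance : Adag * A * X j = X j
  have hl : ∀ j, Adag * A * X j = X j := by
    intro j
    induction j with
    | zero => rw [hX0, Matrix.mul_smul, hAH1]
    | succ j ih => rw [hX j, ← Matrix.mul_assoc, ih]
  -- right invariance : X j * (A * Adag) = X j
  have hr : ∀ j, X j * (A * Adag) = X j := by
    intro j
    induction j with
    | zero => rw [hX0, Matrix.smul_mul, hAH2]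
    | succ j ih => rw [halt j, Matrix.mul_assoc, ih]
  intro j
  -- abbreviations (plain `have`-style definitional equalities)
  have hGA : (1 - X j * A) * Adag = Adag - X j := by
    rw [Matrix.sub_mul, Matrix.one_mul, Matrix.mul_assoc, hr j]
  have hADD : Adag * A * (Adag - X j) = Adag - X j := by
    rw [Matrix.mul_sub, h2, hl j]
  have h6 : (Adag - X j) * A * (Adag - X j)
      = (Adag - X j) - X j * A * (Adag - X j) := by
    conv_lhs => rw [Matrix.sub_mul]
    rw [Matrix.sub_mul, hADD]
  have hGD : (1 - X j * A) * (Adag - X j)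
      = (Adag - X j) * (A * (Adag - X j)) := by
    rw [Matrix.sub_mul, Matrix.one_mul, ← Matrix.mul_assoc, h6]
  have hpowD : ∀ k : ℕ, (1 - X j * A) ^ k * (Adag - X j)
      = ((Adag - X j) * A) ^ k * (Adag - X j) := by
    intro k
    induction k with
    | zero => simp
    | succ k ih =>
      rw [pow_succ, Matrix.mul_assoc, hGD, ← Matrix.mul_assoc, ih, pow_succ]
      simp only [Matrix.mul_assoc]
  -- geometric series identity
  have hgeo : 1 - X (j + 1) * A = (1 - X j * A) ^ 10 := by
    have h7 := geom_sum_mul (1 - X j * A) 10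
    have e0 : (1 - X j * A) - 1 = -(X j * A) := by abel
    rw [e0, mul_neg] at h7
    have h8 : (∑ s ∈ Finset.range 10, (1 - X j * A) ^ s) * (X j * A)
        = 1 - (1 - X j * A) ^ 10 := by
      have h9 : (∑ s ∈ Finset.range 10, (1 - X j * A) ^ s) * (X j * A)
          = -((1 - X j * A) ^ 10 - 1) := by rw [← h7, neg_neg]
      rw [h9, neg_sub]
    rw [halt j, Matrix.mul_assoc, h8, sub_sub_cancel]
  have hDAA : (Adag - X j) * (A * Adag) = Adag - X j := by
    rw [Matrix.sub_mul, hr j, ← Matrix.mul_assoc, h2]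
  -- the key identity
  have hkey : X (j + 1) - Adag = -(((Adag - X j) * A) ^ 10 * Adag) := by
    have e1 : X (j + 1) - Adag = -((1 - X (j + 1) * A) * Adag) := by
      rw [Matrix.sub_mul, Matrix.one_mul, Matrix.mul_assoc, hr (j + 1), neg_sub]
    rw [e1]
    rw [hgeo]
    refine congrArg Neg.neg ?_
    have h10 : (10 : ℕ) = 9 + 1 := rfl
    calc (1 - X j * A) ^ 10 * Adag
        = (1 - X j * A) ^ 9 * ((1 - X j * A) * Adag) := by
          rw [h10, pow_succ, Matrix.mul_assoc]
      _ = (1 - X j * A) ^ 9 * (Adag - X j) := by rw [hGA]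
      _ = ((Adag - X j) * A) ^ 9 * (Adag - X j) := hpowD 9
      _ = ((Adag - X j) * A) ^ 9 * ((Adag - X j) * (A * Adag)) := by rw [hDAA]
      _ = ((Adag - X j) * A) ^ 10 * Adag := by
          conv_rhs => rw [h10, pow_succ]
          simp only [Matrix.mul_assoc]
  -- norm estimates
  have hpow : ∀ k : ℕ, ‖((Adag - X j) * A) ^ (k + 1)‖ ≤ ‖(Adag - X j) * A‖ ^ (k + 1) := by
    intro k
    induction k with
    | zero => simp
    | succ k ih =>
      rw [pow_succ, pow_succ]
      exact le_trans (Matrix.linfty_opNorm_mul _ _)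
        (mul_le_mul_of_nonneg_right ih (norm_nonneg _))
  have hDA : ‖(Adag - X j) * A‖ ≤ ‖Adag - X j‖ * ‖A‖ := Matrix.linfty_opNorm_mul _ _
  have hnD : ‖Adag - X j‖ = ‖X j - Adag‖ := norm_sub_rev _ _
  have hb1 : ‖X (j + 1) - Adag‖ ≤ ‖((Adag - X j) * A) ^ 10‖ * ‖Adag‖ := by
    rw [hkey, norm_neg]
    exact Matrix.linfty_opNorm_mul _ _
  have hb2 : ‖((Adag - X j) * A) ^ 10‖ ≤ ‖(Adag - X j) * A‖ ^ 10 := hpow 9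
  have hb3 : ‖(Adag - X j) * A‖ ^ 10 ≤ (‖Adag - X j‖ * ‖A‖) ^ 10 :=
    pow_le_pow_left₀ (norm_nonneg _) hDA 10
  have hb4 : ‖((Adag - X j) * A) ^ 10‖ * ‖Adag‖ ≤ (‖Adag - X j‖ * ‖A‖) ^ 10 * ‖Adag‖ :=
    mul_le_mul_of_nonneg_right (le_trans hb2 hb3) (norm_nonneg _)
  calc ‖X (j + 1) - Adag‖ ≤ (‖Adag - X j‖ * ‖A‖) ^ 10 * ‖Adag‖ := le_trans hb1 hb4
    _ = ‖Adag‖ * ‖A‖ ^ 10 * ‖X j - Adag‖ ^ 10 := by rw [hnD]; ring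
end

section
/- (Theorem 3.7, convergence of QSAI.) Let A be an m×n matrix over the real quaternions and let A† be an n×m quaternion matrix satisfying the four Penrose equations. Fix a real scalar α and define the order-10 hyperpower sequence X₀ = α • Aᴴ, X_{j+1} = X_j · (∑_{s=0}^{9} (I − A·X_j)^s). If the initial residual satisfies ‖A·X₀ − A·A†‖ < 1 in the L∞ operator norm on quaternion matrices, then the sequence X_j converges to A† (Tendsto X_j atTop (nhds A†)). -/
/-!
Write `P = A A†` and `Fⱼ = P - A Xⱼ`. Since `X₀ = α Aᴴ`, the Penrose equations give
`X₀ P = X₀` and `A† A X₀ = X₀`, and both identities pass to every iterate (`P` commutes with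
`I - A Xⱼ`). The geometric sum gives `I - A Xⱼ₊₁ = (I - A Xⱼ)^p`, and `I - A Xⱼ` is the sum of the
idempotent `I - P` and `Fⱼ`, which annihilate each other; hence `Fⱼ₊₁ = Fⱼ^p` and
`Fⱼ = F₀^(p^j) → 0` because `‖F₀‖ < 1`. Finally `Xⱼ = A† - A† Fⱼ → A†`.
-/

open Matrix Finset Filter Topology

attribute [local instance] Matrix.linftyOpNormedAddCommGroup

theorem IsIdempotentElem.add_pow_of_mul_eq_zero {R : Type*} [Semiring R] {e f : R}
    (he : IsIdempotentElem e) (hef : e * f = 0) (hfe : f * e = 0) :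
    ∀ {p : ℕ}, p ≠ 0 → (e + f) ^ p = e + f ^ p
  | 1, _ => by rw [pow_one, pow_one]
  | p + 2, _ => by
    have hfpe : f ^ (p + 1) * e = 0 := by rw [pow_succ, mul_assoc, hfe, mul_zero]
    rw [pow_succ, IsIdempotentElem.add_pow_of_mul_eq_zero he hef hfe p.succ_ne_zero, add_mul,
      mul_add, mul_add, he.eq, hef, hfpe, ← pow_succ, add_zero, zero_add]

namespace Matrix

variable {R : Type*} {m n : Type*} [Fintype m] [Fintype n] [DecidableEq m]

section Ring

variable [Ring R] {A : Matrix m n R} {G : Matrix n m R} {X : Matrix n m R} {p : ℕ}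

def hyperpowerStep (A : Matrix m n R) (p : ℕ) (X : Matrix n m R) : Matrix n m R :=
  X * ∑ s ∈ range p, (1 - A * X) ^ s

theorem one_sub_mul_hyperpowerStep : 1 - A * hyperpowerStep A p X = (1 - A * X) ^ p := by
  have h := mul_neg_geom_sum (1 - A * X) p
  rw [sub_sub_cancel] at h
  rw [hyperpowerStep, ← Matrix.mul_assoc, h, sub_sub_cancel]

theorem commute_mul_one_sub_mul (hAGA : A * G * A = A) (hX : X * (A * G) = X) :
    Commute (A * G) (1 - A * X) := by
  rw [Commute, SemiconjBy, Matrix.mul_sub, Matrix.sub_mul, Matrix.mul_one, Matrix.one_mul,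
    ← Matrix.mul_assoc, hAGA, Matrix.mul_assoc A X, hX]

theorem hyperpowerStep_mul_eq_self (hAGA : A * G * A = A) (hX : X * (A * G) = X) :
    hyperpowerStep A p X * (A * G) = hyperpowerStep A p X := by
  have hcomm := Commute.sum_right (range p) _ _ fun s _ =>
    (commute_mul_one_sub_mul hAGA hX).pow_right s
  rw [hyperpowerStep, Matrix.mul_assoc, ← hcomm.eq, ← Matrix.mul_assoc, hX]

theorem sub_mul_hyperpowerStep (hAGA : A * G * A = A) (hX : X * (A * G) = X) (hp : p ≠ 0) :
    A * G - A * hyperpowerStep A p X = (A * G - A * X) ^ p := by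
  have hAG : IsIdempotentElem (A * G) := by rw [IsIdempotentElem, ← Matrix.mul_assoc, hAGA]
  have hPF : (1 - A * G) * (A * G - A * X) = 0 := by
    simp only [Matrix.sub_mul, Matrix.one_mul, Matrix.mul_sub, ← Matrix.mul_assoc, hAGA]
    abel
  have hFP : (A * G - A * X) * (1 - A * G) = 0 := by
    simp only [Matrix.mul_sub, Matrix.mul_one, Matrix.sub_mul, hAG.eq, Matrix.mul_assoc A X, hX]
    abel
  have hsplit : 1 - A * X = (1 - A * G) + (A * G - A * X) := by abel
  have h := one_sub_mul_hyperpowerStep (A := A) (X := X) (p := p)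
  rw [hsplit, hAG.one_sub.add_pow_of_mul_eq_zero hPF hFP hp] at h
  calc A * G - A * hyperpowerStep A p X
      = (1 - A * hyperpowerStep A p X) - (1 - A * G) := by abel
    _ = (A * G - A * X) ^ p := by rw [h]; abel

variable {X : ℕ → Matrix n m R}

theorem hyperpower_iterate_mul_eq_self (hAGA : A * G * A = A)
    (hX : ∀ j, X (j + 1) = hyperpowerStep A p (X j)) (hX0 : X 0 * (A * G) = X 0) :
    ∀ j, X j * (A * G) = X j
  | 0 => hX0
  | j + 1 => by
    rw [hX j, hyperpowerStep_mul_eq_self hAGA (hyperpower_iterate_mul_eq_self hAGA hX hX0 j)]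

theorem mul_hyperpower_iterate_eq_self (hX : ∀ j, X (j + 1) = hyperpowerStep A p (X j))
    (hX0 : G * A * X 0 = X 0) : ∀ j, G * A * X j = X j
  | 0 => hX0
  | j + 1 => by
    rw [hX j, hyperpowerStep, ← Matrix.mul_assoc, mul_hyperpower_iterate_eq_self hX hX0 j]

theorem sub_mul_hyperpower_iterate_eq_pow (hAGA : A * G * A = A) (hp : p ≠ 0)
    (hX : ∀ j, X (j + 1) = hyperpowerStep A p (X j)) (hX0 : X 0 * (A * G) = X 0) (j : ℕ) :
    A * G - A * X j = (A * G - A * X 0) ^ (p ^ j) := by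
  induction j with
  | zero => rw [pow_zero, pow_one]
  | succ j ih =>
    rw [hX j, sub_mul_hyperpowerStep hAGA (hyperpower_iterate_mul_eq_self hAGA hX hX0 j) hp, ih,
      ← pow_mul, pow_succ]

end Ring

section Normed

attribute [local instance] Matrix.linftyOpNormedRing

variable [NormedRing R] {A : Matrix m n R} {G : Matrix n m R} {X : ℕ → Matrix n m R} {p : ℕ}

theorem tendsto_hyperpower_iterate (hAGA : A * G * A = A) (hGAG : G * A * G = G) (hp : 2 ≤ p)
    (hX : ∀ j, X (j + 1) = hyperpowerStep A p (X j))
    (hX0 : X 0 * (A * G) = X 0) (hGX0 : G * A * X 0 = X 0) (hres : ‖A * X 0 - A * G‖ < 1) :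
    Tendsto X atTop (𝓝 G) := by
  have hF : Tendsto (fun j => (A * G - A * X 0) ^ (p ^ j)) atTop (𝓝 0) :=
    (tendsto_pow_atTop_nhds_zero_of_norm_lt_one (by rwa [norm_sub_rev] at hres)).comp
      (tendsto_pow_atTop_atTop_of_one_lt hp)
  have hXG : ∀ j, X j = G - G * (A * G - A * X 0) ^ (p ^ j) := fun j => by
    rw [← sub_mul_hyperpower_iterate_eq_pow hAGA (by omega) hX hX0, Matrix.mul_sub,
      ← Matrix.mul_assoc, hGAG, ← Matrix.mul_assoc, mul_hyperpower_iterate_eq_self hX hGX0,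
      sub_sub_cancel]
  refine (tendsto_congr hXG).mpr ?_
  simpa using tendsto_const_nhds.sub
    (((continuous_const.matrix_mul continuous_id).tendsto 0).comp hF)

end Normed

end Matrix

/-- Theorem 3.7 (convergence of QSAI): if the initial residual satisfies
`‖A·X₀ − A·A†‖ < 1` in the L∞ operator norm, then the order-10 hyperpower
iterates converge to the Moore–Penrose inverse `A†`. -/
theorem qsai_convergence
    {m n : ℕ} (A : Matrix (Fin m) (Fin n) (Quaternion ℝ))
    (Adag : Matrix (Fin n) (Fin m) (Quaternion ℝ))
    (h1 : A * Adag * A = A) (h2 : Adag * A * Adag = Adag)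
    (h3 : (A * Adag)ᴴ = A * Adag) (h4 : (Adag * A)ᴴ = Adag * A)
    (α : ℝ)
    (X : ℕ → Matrix (Fin n) (Fin m) (Quaternion ℝ))
    (hX0 : X 0 = α • Aᴴ)
    (hX : ∀ j, X (j + 1) = X j * ∑ s ∈ Finset.range 10, (1 - A * X j) ^ s)
    (hres : ‖A * X 0 - A * Adag‖ < 1) :
    Tendsto X atTop (nhds Adag) := by
  have hAH : Aᴴ * (A * Adag) = Aᴴ := by
    rw [← h3, ← conjTranspose_mul, h1]
  have hAH' : Adag * A * Aᴴ = Aᴴ := by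
    rw [← h4, ← conjTranspose_mul, ← Matrix.mul_assoc, h1]
  refine tendsto_hyperpower_iterate h1 h2 (p := 10) (by norm_num) hX ?_ ?_ hres
  · rw [hX0, Matrix.smul_mul, hAH]
  · rw [hX0, Matrix.mul_smul, hAH']
end

section
/- (Theorem 3.10, order bound for QHPI19.) Let A be an m×n matrix over the real quaternions and let A† be an n×m quaternion matrix satisfying the four Penrose equations. Fix a real scalar α and define the order-19 hyperpower sequence X₀ = α • Aᴴ, X_{j+1} = X_j · (∑_{s=0}^{18} (I − A·X_j)^s). Then, with respect to the L∞ operator norm on quaternion matrices, for every j ≥ 0 one has ‖X_{j+1} − A†‖ ≤ ‖A†‖ · ‖A‖^{19} · ‖X_j − A†‖^{19}. -/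
open Matrix Finset Quaternion

attribute [local instance] Matrix.linftyOpNormedAddCommGroup

/-- Theorem 3.10 (order bound for QHPI19): the order-19 hyperpower iterates satisfy
`‖X_{j+1} − A†‖ ≤ ‖A†‖·‖A‖^19·‖X_j − A†‖^19` in the L∞ operator norm. -/
theorem qhpi19_order_bound
    {m n : ℕ} (A : Matrix (Fin m) (Fin n) (Quaternion ℝ))
    (Adag : Matrix (Fin n) (Fin m) (Quaternion ℝ))
    (h1 : A * Adag * A = A) (h2 : Adag * A * Adag = Adag)
    (h3 : (A * Adag)ᴴ = A * Adag) (h4 : (Adag * A)ᴴ = Adag * A)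
    (α : ℝ)
    (X : ℕ → Matrix (Fin n) (Fin m) (Quaternion ℝ))
    (hX0 : X 0 = α • Aᴴ)
    (hX : ∀ j, X (j + 1) = X j * ∑ s ∈ Finset.range 19, (1 - A * X j) ^ s) :
    ∀ j, ‖X (j + 1) - Adag‖ ≤ ‖Adag‖ * ‖A‖ ^ 19 * ‖X j - Adag‖ ^ 19 := by
  -- invariant 1 : Adag * A * X j = X j
  have hAH1 : Adag * A * Aᴴ = Aᴴ := by
    calc Adag * A * Aᴴ = (Adag * A)ᴴ * Aᴴ := by rw [h4]
    _ = (A * (Adag * A))ᴴ := (conjTranspose_mul _ _).symm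
    _ = Aᴴ := by rw [← Matrix.mul_assoc, h1]
  have inv1 : ∀ j, Adag * A * X j = X j := by
    intro j
    induction j with
    | zero => rw [hX0, Matrix.mul_smul, hAH1]
    | succ k ih => rw [hX k, ← Matrix.mul_assoc, ih]
  have hAH2 : Aᴴ * (A * Adag) = Aᴴ := by
    calc Aᴴ * (A * Adag) = Aᴴ * (A * Adag)ᴴ := by rw [h3]
    _ = ((A * Adag) * A)ᴴ := (conjTranspose_mul _ _).symm
    _ = Aᴴ := by rw [h1]
  -- invariant 2 : X j * (A * Adag) = X j
  have inv2 : ∀ j, X j * (A * Adag) = X j := by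
    intro j
    induction j with
    | zero => rw [hX0, Matrix.smul_mul, hAH2]
    | succ k ih =>
      have hc : Commute (1 - A * X k) (A * Adag) := by
        show (1 - A * X k) * (A * Adag) = (A * Adag) * (1 - A * X k)
        rw [sub_mul, mul_sub, one_mul, mul_one, Matrix.mul_assoc A (X k), ih,
          ← Matrix.mul_assoc (A * Adag) A (X k), h1]
      have hsum : (∑ s ∈ Finset.range 19, (1 - A * X k) ^ s) * (A * Adag)
          = (A * Adag) * ∑ s ∈ Finset.range 19, (1 - A * X k) ^ s := by
        rw [Finset.sum_mul, Finset.mul_sum]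
        exact Finset.sum_congr rfl fun s _ => (hc.pow_left s).eq
      rw [hX k, Matrix.mul_assoc, hsum, ← Matrix.mul_assoc, ih]
  intro j
  obtain ⟨E, hE⟩ : ∃ M, M = 1 - A * X j := ⟨_, rfl⟩
  obtain ⟨G, hG⟩ : ∃ M, M = A * Adag - A * X j := ⟨_, rfl⟩
  -- A * X (j+1) = 1 - E ^ 19
  have hAX : A * X (j + 1) = 1 - E ^ 19 := by
    have hx : A * X j = 1 - E := by rw [hE]; abel
    rw [hX j, ← Matrix.mul_assoc, ← hE, hx, mul_neg_geom_sum]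
  -- X (j+1) - Adag = -(Adag * E^19)
  have key1 : X (j + 1) - Adag = -(Adag * E ^ 19) := by
    have h5 : X (j + 1) = Adag * (A * X (j + 1)) := by
      rw [← Matrix.mul_assoc, inv1]
    conv_lhs => rw [h5, hAX]
    rw [Matrix.mul_sub, Matrix.mul_one]
    abel
  have hGA : G * (A * Adag) = G := by
    rw [hG, sub_mul, Matrix.mul_assoc A (X j) (A * Adag), inv2,
      ← Matrix.mul_assoc (A * Adag) A Adag, h1]
  -- Adag * E^(k+1) = Adag * G^(k+1)
  have key2 : ∀ k, Adag * E ^ (k + 1) = Adag * G ^ (k + 1) := by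
    intro k
    induction k with
    | zero =>
      rw [zero_add, pow_one, pow_one, hE, hG, Matrix.mul_sub, Matrix.mul_sub,
        Matrix.mul_one, ← Matrix.mul_assoc Adag A (X j), ← Matrix.mul_assoc Adag A Adag,
        h2, inv1]
    | succ k ih =>
      have hEG : E = G + (1 - A * Adag) := by rw [hE, hG]; abel
      have hge : G * E = G * G := by
        have h8 : G * (1 - A * Adag) = 0 := by
          rw [Matrix.mul_sub, Matrix.mul_one, hGA, sub_self]
        rw [hEG, mul_add, h8, add_zero]
      calc Adag * E ^ (k + 1 + 1) = Adag * E ^ (k + 1) * E := by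
            rw [pow_succ, ← Matrix.mul_assoc]
      _ = Adag * G ^ (k + 1) * E := by rw [ih]
      _ = Adag * (G ^ k * (G * E)) := by
            rw [Matrix.mul_assoc, pow_succ, mul_assoc]
      _ = Adag * (G ^ k * (G * G)) := by rw [hge]
      _ = Adag * G ^ (k + 1 + 1) := by rw [← mul_assoc, ← pow_succ, ← pow_succ]
  -- norm bound
  have hbound : ∀ k, ‖Adag * G ^ k‖ ≤ ‖Adag‖ * ‖G‖ ^ k := by
    intro k
    induction k with
    | zero => simp
    | succ k ih =>
      calc ‖Adag * G ^ (k + 1)‖ = ‖Adag * G ^ k * G‖ := by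
            rw [pow_succ, ← Matrix.mul_assoc]
      _ ≤ ‖Adag * G ^ k‖ * ‖G‖ := Matrix.linfty_opNorm_mul _ _
      _ ≤ ‖Adag‖ * ‖G‖ ^ k * ‖G‖ :=
            mul_le_mul_of_nonneg_right ih (norm_nonneg _)
      _ = ‖Adag‖ * ‖G‖ ^ (k + 1) := by ring
  have hGnorm : ‖G‖ ≤ ‖A‖ * ‖X j - Adag‖ := by
    have hGeq : G = A * (Adag - X j) := by rw [hG, Matrix.mul_sub]
    rw [hGeq]
    calc ‖A * (Adag - X j)‖ ≤ ‖A‖ * ‖Adag - X j‖ := Matrix.linfty_opNorm_mul _ _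
    _ = ‖A‖ * ‖X j - Adag‖ := by rw [norm_sub_rev]
  have k19 := key2 18
  norm_num at k19
  calc ‖X (j + 1) - Adag‖ = ‖Adag * G ^ 19‖ := by
        rw [key1, norm_neg, k19]
  _ ≤ ‖Adag‖ * ‖G‖ ^ 19 := hbound 19
  _ ≤ ‖Adag‖ * (‖A‖ * ‖X j - Adag‖) ^ 19 := by
        apply mul_le_mul_of_nonneg_left _ (norm_nonneg _)
        exact pow_le_pow_left₀ (norm_nonneg _) hGnorm 19
  _ = ‖Adag‖ * ‖A‖ ^ 19 * ‖X j - Adag‖ ^ 19 := by ring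
end

section
/- (Theorem 3.4, case N = 0: fifth-order convergence of QRAPID.) Let A be an m×n matrix over the real quaternions and let A† be an n×m quaternion matrix satisfying the four Penrose equations. Fix a real scalar α and define the QRAPID sequence (step parameter N = 0): X₀ = α • Aᴴ, and for each j set P_j = A·X_j, U_j = (1/4) • X_j·(13I − P_j·(15I − P_j·(7I − P_j))), V_j = U_j + X_j·(I − A·U_j), X_{j+1} = V_j + X_j·(I − A·V_j). If ‖A·X₀ − A·A†‖ ≤ 1 in the L∞ operator norm on quaternion matrices, then for every j ≥ 0 one has ‖X_{j+1} − A†‖ ≤ ‖A†‖ · ‖A‖^{5} · ‖X_j − A†‖^{5}. -/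
open Matrix Finset Quaternion

attribute [local instance] Matrix.linftyOpNormedAddCommGroup
attribute [local instance] Matrix.linftyOpNormedSpace

private lemma qrapid_key {R : Type*} [Ring R] [Algebra ℝ R] (t q : R)
    (hqq : q * q = q) (hqt : q * t = t) (htq : t * q = t)
    (f : R) (hf : f = (1/4:ℝ) • (t * (13 - t * (15 - t * (7 - t))))) :
    ((f + t*(1-f)) + t*(1 - (f + t*(1-f)))) - q
      = (3/4:ℝ) • (t-q)^5 - (1/4:ℝ) • (t-q)^6 := by
  have h1 : ∀ x : R, q * (q * x) = q * x := fun x => by rw [← mul_assoc, hqq]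
  have h2 : ∀ x : R, q * (t * x) = t * x := fun x => by rw [← mul_assoc, hqt]
  have h3 : ∀ x : R, t * (q * x) = t * x := fun x => by rw [← mul_assoc, htq]
  have e13 : (13:R) = (13:ℝ) • 1 := by rw [Algebra.smul_def, mul_one, map_ofNat]
  have e15 : (15:R) = (15:ℝ) • 1 := by rw [Algebra.smul_def, mul_one, map_ofNat]
  have e7 : (7:R) = (7:ℝ) • 1 := by rw [Algebra.smul_def, mul_one, map_ofNat]
  subst hf
  rw [e13, e15, e7]
  simp only [pow_succ, pow_zero, one_mul]
  simp only [smul_sub, smul_add, mul_sub, sub_mul, mul_add, add_mul, mul_one, one_mul,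
    mul_smul_comm, smul_mul_assoc, smul_smul, mul_assoc, hqq, hqt, htq, h1, h2, h3]
  module

set_option maxHeartbeats 1600000 in
/-- Theorem 3.4, case N = 0: fifth-order convergence of QRAPID. If the initial
residual satisfies `‖A·X₀ − A·A†‖ ≤ 1` in the L∞ operator norm, then
`‖X_{j+1} − A†‖ ≤ ‖A†‖·‖A‖^5·‖X_j − A†‖^5` for every `j`. -/
theorem qrapid_N0_order_bound
    {m n : ℕ} (A : Matrix (Fin m) (Fin n) (Quaternion ℝ))
    (Adag : Matrix (Fin n) (Fin m) (Quaternion ℝ))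
    (h1 : A * Adag * A = A) (h2 : Adag * A * Adag = Adag)
    (h3 : (A * Adag)ᴴ = A * Adag) (h4 : (Adag * A)ᴴ = Adag * A)
    (α : ℝ)
    (X U V : ℕ → Matrix (Fin n) (Fin m) (Quaternion ℝ))
    (P : ℕ → Matrix (Fin m) (Fin m) (Quaternion ℝ))
    (hX0 : X 0 = α • Aᴴ)
    (hP : ∀ j, P j = A * X j)
    (hU : ∀ j, U j = (1 / 4 : ℝ) • (X j * (13 - P j * (15 - P j * (7 - P j)))))
    (hV : ∀ j, V j = U j + X j * (1 - A * U j))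
    (hX : ∀ j, X (j + 1) = V j + X j * (1 - A * V j))
    (hres : ‖A * X 0 - A * Adag‖ ≤ 1) :
    ∀ j, ‖X (j + 1) - Adag‖ ≤ ‖Adag‖ * ‖A‖ ^ 5 * ‖X j - Adag‖ ^ 5 := by
  have e13 : (13:Matrix (Fin m) (Fin m) (Quaternion ℝ)) = (13:ℝ) • 1 := by
    rw [Algebra.smul_def, mul_one, map_ofNat]
  have e15 : (15:Matrix (Fin m) (Fin m) (Quaternion ℝ)) = (15:ℝ) • 1 := by
    rw [Algebra.smul_def, mul_one, map_ofNat]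
  have e7 : (7:Matrix (Fin m) (Fin m) (Quaternion ℝ)) = (7:ℝ) • 1 := by
    rw [Algebra.smul_def, mul_one, map_ofNat]
  have hAH1 : Aᴴ * (A * Adag) = Aᴴ := by
    rw [← h3, ← conjTranspose_mul, h1]
  have hAH2 : Adag * (A * Aᴴ) = Aᴴ := by
    rw [← Matrix.mul_assoc, ← h4, ← conjTranspose_mul, ← Matrix.mul_assoc, h1]
  -- right invariance: X j * (A * A†) = X j
  have hR : ∀ j, X j * (A * Adag) = X j := by
    intro j
    induction j with
    | zero => rw [hX0, Matrix.smul_mul, hAH1]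
    | succ k ih =>
      rw [hX k, hV k, hU k, hP k, e13, e15, e7]
      simp only [Matrix.add_mul, Matrix.sub_mul, Matrix.mul_add, Matrix.mul_sub,
        Matrix.mul_one, Matrix.one_mul, Matrix.smul_mul, Matrix.mul_smul,
        smul_sub, smul_add, smul_smul, Matrix.mul_assoc, ih]
  -- left invariance: A† (A X j) = X j
  have hL : ∀ j, Adag * (A * X j) = X j := by
    intro j
    induction j with
    | zero => rw [hX0, Matrix.mul_smul, Matrix.mul_smul, hAH2]
    | succ k ih =>
      have ihB : ∀ B : Matrix (Fin m) (Fin m) (Quaternion ℝ),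
          Adag * (A * (X k * B)) = X k * B := fun B => by
        rw [← Matrix.mul_assoc A (X k) B, ← Matrix.mul_assoc Adag (A * X k) B, ih]
      rw [hX k, hV k, hU k, hP k]
      simp only [Matrix.mul_add, Matrix.mul_sub, Matrix.mul_one, Matrix.mul_smul,
        smul_sub, smul_add, Matrix.mul_assoc, ihB, ih]
  -- relations for T = A X j, Q = A A†
  have hQQ : (A * Adag) * (A * Adag) = A * Adag := by
    rw [Matrix.mul_assoc A Adag (A * Adag), ← Matrix.mul_assoc Adag A Adag, h2]
  have hQT : ∀ j, (A * Adag) * (A * X j) = A * X j := fun j => by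
    rw [← Matrix.mul_assoc, h1]
  have hTQ : ∀ j, (A * X j) * (A * Adag) = A * X j := fun j => by
    rw [Matrix.mul_assoc, hR]
  -- key identity
  have hkey : ∀ j, A * X (j+1) - A * Adag
      = (3/4:ℝ) • (A * X j - A * Adag)^5 - (1/4:ℝ) • (A * X j - A * Adag)^6 := by
    intro j
    have hf : A * U j
        = (1/4:ℝ) • ((A * X j) * (13 - (A * X j) * (15 - (A * X j) * (7 - (A * X j))))) := by
      rw [hU j, hP j, Matrix.mul_smul, ← Matrix.mul_assoc]
    have hAX : A * X (j+1) = ((A * U j) + (A * X j)*(1-(A * U j)))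
        + (A * X j)*(1 - ((A * U j) + (A * X j)*(1-(A * U j)))) := by
      rw [hX j, hV j]
      simp only [Matrix.mul_add, ← Matrix.mul_assoc]
    rw [hAX]
    exact qrapid_key (A * X j) (A * Adag) hQQ (hQT j) (hTQ j) (A * U j) hf
  -- norm machinery
  have hmul : ∀ {a b c : ℕ} (M : Matrix (Fin a) (Fin b) (Quaternion ℝ))
      (N : Matrix (Fin b) (Fin c) (Quaternion ℝ)), ‖M * N‖ ≤ ‖M‖ * ‖N‖ :=
    fun M N => Matrix.linfty_opNorm_mul M N
  have hpow : ∀ (M : Matrix (Fin m) (Fin m) (Quaternion ℝ)) (k : ℕ),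
      ‖M^(k+1)‖ ≤ ‖M‖^(k+1) := by
    intro M k
    induction k with
    | zero => simp
    | succ l ih =>
      calc ‖M^(l+1+1)‖ = ‖M^(l+1) * M‖ := by rw [pow_succ]
      _ ≤ ‖M^(l+1)‖ * ‖M‖ := hmul _ _
      _ ≤ ‖M‖^(l+1) * ‖M‖ := mul_le_mul_of_nonneg_right ih (norm_nonneg M)
      _ = ‖M‖^(l+1+1) := by ring
  have hstep : ∀ j, ‖A * X (j+1) - A * Adag‖
      ≤ (3/4) * ‖A * X j - A * Adag‖^5 + (1/4) * ‖A * X j - A * Adag‖^6 := by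
    intro j
    have h5 : ‖(A * X j - A * Adag)^5‖ ≤ ‖A * X j - A * Adag‖^5 := by
      simpa using hpow (A * X j - A * Adag) 4
    have h6 : ‖(A * X j - A * Adag)^6‖ ≤ ‖A * X j - A * Adag‖^6 := by
      simpa using hpow (A * X j - A * Adag) 5
    rw [hkey j]
    calc ‖(3/4:ℝ) • (A * X j - A * Adag)^5 - (1/4:ℝ) • (A * X j - A * Adag)^6‖
        ≤ ‖(3/4:ℝ) • (A * X j - A * Adag)^5‖ + ‖(1/4:ℝ) • (A * X j - A * Adag)^6‖ :=
          norm_sub_le _ _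
      _ = (3/4) * ‖(A * X j - A * Adag)^5‖ + (1/4) * ‖(A * X j - A * Adag)^6‖ := by
          rw [norm_smul, norm_smul, Real.norm_eq_abs, Real.norm_eq_abs,
            abs_of_nonneg (by norm_num : (0:ℝ) ≤ 3/4),
            abs_of_nonneg (by norm_num : (0:ℝ) ≤ 1/4)]
      _ ≤ (3/4) * ‖A * X j - A * Adag‖^5 + (1/4) * ‖A * X j - A * Adag‖^6 :=
          add_le_add (mul_le_mul_of_nonneg_left h5 (by norm_num))
            (mul_le_mul_of_nonneg_left h6 (by norm_num))
  have hEb : ∀ j, ‖A * X j - A * Adag‖ ≤ 1 := by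
    intro j
    induction j with
    | zero => exact hres
    | succ k ih =>
      have h5 : ‖A * X k - A * Adag‖^5 ≤ 1 := pow_le_one₀ (norm_nonneg _) ih
      have h6 : ‖A * X k - A * Adag‖^6 ≤ 1 := pow_le_one₀ (norm_nonneg _) ih
      have := hstep k
      linarith
  intro j
  have hE5 : ‖A * X (j+1) - A * Adag‖ ≤ ‖A * X j - A * Adag‖^5 := by
    have h6 : ‖A * X j - A * Adag‖^6 ≤ ‖A * X j - A * Adag‖^5 := by
      calc ‖A * X j - A * Adag‖^6
          = ‖A * X j - A * Adag‖^5 * ‖A * X j - A * Adag‖ := by ring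
        _ ≤ ‖A * X j - A * Adag‖^5 * 1 :=
            mul_le_mul_of_nonneg_left (hEb j) (by positivity)
        _ = ‖A * X j - A * Adag‖^5 := by ring
    have := hstep j
    linarith
  have hdiff : X (j+1) - Adag = Adag * (A * X (j+1) - A * Adag) := by
    rw [Matrix.mul_sub, hL (j+1), ← Matrix.mul_assoc, h2]
  have hEA : ‖A * X j - A * Adag‖ ≤ ‖A‖ * ‖X j - Adag‖ := by
    rw [← Matrix.mul_sub]
    exact hmul _ _
  calc ‖X (j+1) - Adag‖ = ‖Adag * (A * X (j+1) - A * Adag)‖ := by rw [hdiff]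
    _ ≤ ‖Adag‖ * ‖A * X (j+1) - A * Adag‖ := hmul _ _
    _ ≤ ‖Adag‖ * ‖A * X j - A * Adag‖^5 :=
        mul_le_mul_of_nonneg_left hE5 (norm_nonneg _)
    _ ≤ ‖Adag‖ * (‖A‖ * ‖X j - Adag‖)^5 :=
        mul_le_mul_of_nonneg_left (pow_le_pow_left₀ (norm_nonneg _) hEA 5) (norm_nonneg _)
    _ = ‖Adag‖ * ‖A‖^5 * ‖X j - Adag‖^5 := by ring
end

section
/- (Residual identity for one QRAPID step with N = 0.) Let A be an m×n matrix over the real quaternions and X an n×m quaternion matrix. Set P = A·X, R = I − P, U = (1/4) • X·(13I − P·(15I − P·(7I − P))), V = U + X·(I − A·U), and X' = V + X·(I − A·V). Then the residual after one step satisfies I − A·X' = (3/4) • R^5 + (1/4) • R^6. -/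
open Matrix

/-- Residual identity for one QRAPID step with step parameter N = 0:
`I − A·X' = (3/4) • R^5 + (1/4) • R^6`. -/
theorem qrapid_N0_residual_identity
    {m n : ℕ} (A : Matrix (Fin m) (Fin n) (Quaternion ℝ))
    (X : Matrix (Fin n) (Fin m) (Quaternion ℝ))
    (P : Matrix (Fin m) (Fin m) (Quaternion ℝ)) (hP : P = A * X)
    (R : Matrix (Fin m) (Fin m) (Quaternion ℝ)) (hR : R = 1 - P)
    (U : Matrix (Fin n) (Fin m) (Quaternion ℝ))
    (hU : U = (1 / 4 : ℝ) • (X * (13 - P * (15 - P * (7 - P)))))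
    (V : Matrix (Fin n) (Fin m) (Quaternion ℝ))
    (hV : V = U + X * (1 - A * U))
    (X' : Matrix (Fin n) (Fin m) (Quaternion ℝ))
    (hX' : X' = V + X * (1 - A * V)) :
    1 - A * X' = (3 / 4 : ℝ) • R ^ 5 + (1 / 4 : ℝ) • R ^ 6 := by
  have hAU : A * U = (1 / 4 : ℝ) • (P * (13 - P * (15 - P * (7 - P)))) := by
    rw [hU, Matrix.mul_smul, ← Matrix.mul_assoc, ← hP]
  have h1 : (1 : Matrix (Fin m) (Fin m) (Quaternion ℝ)) - A * V = R * (1 - A * U) := by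
    rw [hV, Matrix.mul_add, ← Matrix.mul_assoc, ← hP, hR]; noncomm_ring
  have h2 : (1 : Matrix (Fin m) (Fin m) (Quaternion ℝ)) - A * X' = R * (1 - A * V) := by
    rw [hX', Matrix.mul_add, ← Matrix.mul_assoc, ← hP, hR]; noncomm_ring
  have h4 : (4 : Matrix (Fin m) (Fin m) (Quaternion ℝ)) = (4 : ℝ) • 1 := by
    simp [← Algebra.algebraMap_eq_smul_one, map_ofNat]
  have h4m : ∀ M : Matrix (Fin m) (Fin m) (Quaternion ℝ), (4 : ℝ) • M = 4 * M := by
    intro M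
    conv_lhs => rw [← one_mul M]
    rw [← smul_mul_assoc, ← h4]
  have hS : P * (13 - P * (15 - P * (7 - P)))
      = (4 : ℝ) • (1 : Matrix (Fin m) (Fin m) (Quaternion ℝ))
        - (4 : ℝ) • (1 - P) ^ 3 - (1 - P) ^ 4 + (1 - P) ^ 3 := by
    simp only [h4m]
    noncomm_ring
  have hkey : (1 : Matrix (Fin m) (Fin m) (Quaternion ℝ)) - A * U
      = (3 / 4 : ℝ) • R ^ 3 + (1 / 4 : ℝ) • R ^ 4 := by
    rw [hAU, hS, hR]
    module
  rw [h2, h1, hkey, mul_add, mul_add, mul_smul_comm, mul_smul_comm, mul_smul_comm,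
    mul_smul_comm]
  congr 1
  · congr 1; noncomm_ring
  · congr 1; noncomm_ring
end

section
/- (Residual identity for one QRAPID step with N = 1.) Let A be an m×n matrix over the real quaternions and X an n×m quaternion matrix. Set P = A·X, R = I − P, U = (1/4) • X·(13I − P·(15I − P·(7I − P))), V = U + X·(I − A·U), Z = V + U·(I − A·V), and X' = Z + X·(I − A·Z). Then the residual after one step satisfies I − A·X' = (1/16) • (9 • R^8 + 6 • R^9 + R^{10}). -/
open Matrix

open Polynomial in
private lemma qrapid_poly_aux :
    (1 : ℝ[X]) -
      ((((1 / 4 : ℝ) • (X * (13 - X * (15 - X * (7 - X)))) +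
          X * (1 - (1 / 4 : ℝ) • (X * (13 - X * (15 - X * (7 - X)))))) +
        ((1 / 4 : ℝ) • (X * (13 - X * (15 - X * (7 - X))))) *
          (1 - ((1 / 4 : ℝ) • (X * (13 - X * (15 - X * (7 - X)))) +
            X * (1 - (1 / 4 : ℝ) • (X * (13 - X * (15 - X * (7 - X)))))))) +
       X * (1 - (((1 / 4 : ℝ) • (X * (13 - X * (15 - X * (7 - X)))) +
          X * (1 - (1 / 4 : ℝ) • (X * (13 - X * (15 - X * (7 - X)))))) +
        ((1 / 4 : ℝ) • (X * (13 - X * (15 - X * (7 - X))))) *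
          (1 - ((1 / 4 : ℝ) • (X * (13 - X * (15 - X * (7 - X)))) +
            X * (1 - (1 / 4 : ℝ) • (X * (13 - X * (15 - X * (7 - X)))))))))) =
    (1 / 16 : ℝ) • ((9 : ℝ) • (1 - X) ^ 8 + (6 : ℝ) • (1 - X) ^ 9 + (1 - X) ^ 10) := by
  apply Polynomial.funext
  intro x
  simp only [Polynomial.eval_sub, Polynomial.eval_add, Polynomial.eval_mul, Polynomial.eval_pow,
    Polynomial.eval_one, Polynomial.eval_ofNat, Polynomial.eval_X, Polynomial.eval_smul,
    smul_eq_mul]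
  ring

set_option maxHeartbeats 1600000 in
/-- Residual identity for one QRAPID step with step parameter N = 1:
`I − A·X' = (1/16) • (9 • R^8 + 6 • R^9 + R^10)`. -/
theorem qrapid_N1_residual_identity
    {m n : ℕ} (A : Matrix (Fin m) (Fin n) (Quaternion ℝ))
    (X : Matrix (Fin n) (Fin m) (Quaternion ℝ))
    (P : Matrix (Fin m) (Fin m) (Quaternion ℝ)) (hP : P = A * X)
    (R : Matrix (Fin m) (Fin m) (Quaternion ℝ)) (hR : R = 1 - P)
    (U : Matrix (Fin n) (Fin m) (Quaternion ℝ))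
    (hU : U = (1 / 4 : ℝ) • (X * (13 - P * (15 - P * (7 - P)))))
    (V : Matrix (Fin n) (Fin m) (Quaternion ℝ))
    (hV : V = U + X * (1 - A * U))
    (Z : Matrix (Fin n) (Fin m) (Quaternion ℝ))
    (hZ : Z = V + U * (1 - A * V))
    (X' : Matrix (Fin n) (Fin m) (Quaternion ℝ))
    (hX' : X' = Z + X * (1 - A * Z)) :
    1 - A * X' = (1 / 16 : ℝ) • ((9 : ℝ) • R ^ 8 + (6 : ℝ) • R ^ 9 + R ^ 10) := by
  subst hP hR
  set Q : Matrix (Fin m) (Fin m) (Quaternion ℝ) := A * X with hQ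
  have hAU : A * U = (1 / 4 : ℝ) • (Q * (13 - Q * (15 - Q * (7 - Q)))) := by
    rw [hU, Matrix.mul_smul, ← Matrix.mul_assoc]
  have hAV : A * V = A * U + Q * (1 - A * U) := by
    rw [hV, Matrix.mul_add, ← Matrix.mul_assoc]
  have hAZ : A * Z = A * V + (A * U) * (1 - A * V) := by
    rw [hZ, Matrix.mul_add, ← Matrix.mul_assoc]
  have hAX' : A * X' = A * Z + Q * (1 - A * Z) := by
    rw [hX', Matrix.mul_add, ← Matrix.mul_assoc]
  rw [hAX', hAZ, hAV, hAU]
  have h2 := congrArg (Polynomial.aeval Q) qrapid_poly_aux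
  simp only [map_sub, map_add, _root_.map_mul, _root_.map_smul, _root_.map_one, map_pow,
    Polynomial.aeval_X, map_ofNat] at h2
  rw [h2]
end

section
/- (General residual identity for one QRAPID step, Fibonacci form of Theorem 3.4.) Let A be an m×n matrix over the real quaternions and X an n×m quaternion matrix. Set P = A·X, R = I − P, U = (1/4) • X·(13I − P·(15I − P·(7I − P))), V = U + X·(I − A·U), and define the sequence Z : ℕ → ℍ^{n×m} by Z(0) = U, Z(1) = V, and Z(l+2) = Z(l+1) + Z(l)·(I − A·Z(l+1)). Let F denote the Fibonacci sequence (F(0) = 0, F(1) = F(2) = 1). Then for every N ≥ 0, the matrix X' = Z(N+1) + X·(I − A·Z(N+1)) satisfies I − A·X' = (1/4^{F(N+2)}) • (3•I + R)^{F(N+2)} · R^{3·F(N+2) + F(N+1) + 1}. -/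
open Matrix

/-- General residual identity for one QRAPID step (Fibonacci form of Theorem 3.4):
with `Z 0 = U`, `Z 1 = V`, `Z (l+2) = Z (l+1) + Z l * (I − A·Z (l+1))`, the matrix
`X' = Z (N+1) + X * (I − A·Z (N+1))` satisfies
`I − A·X' = (1/4^{F(N+2)}) • (3I + R)^{F(N+2)} * R^{3F(N+2) + F(N+1) + 1}`. -/
theorem qrapid_general_residual_identity
    {m n : ℕ} (A : Matrix (Fin m) (Fin n) (Quaternion ℝ))
    (X : Matrix (Fin n) (Fin m) (Quaternion ℝ))
    (P : Matrix (Fin m) (Fin m) (Quaternion ℝ)) (hP : P = A * X)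
    (R : Matrix (Fin m) (Fin m) (Quaternion ℝ)) (hR : R = 1 - P)
    (U : Matrix (Fin n) (Fin m) (Quaternion ℝ))
    (hU : U = (1 / 4 : ℝ) • (X * (13 - P * (15 - P * (7 - P)))))
    (V : Matrix (Fin n) (Fin m) (Quaternion ℝ))
    (hV : V = U + X * (1 - A * U))
    (Z : ℕ → Matrix (Fin n) (Fin m) (Quaternion ℝ))
    (hZ0 : Z 0 = U) (hZ1 : Z 1 = V)
    (hZ : ∀ l, Z (l + 2) = Z (l + 1) + Z l * (1 - A * Z (l + 1))) :
    ∀ N : ℕ,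
      1 - A * (Z (N + 1) + X * (1 - A * Z (N + 1)))
        = (1 / (4 : ℝ) ^ Nat.fib (N + 2)) •
            (((3 : ℝ) • (1 : Matrix (Fin m) (Fin m) (Quaternion ℝ)) + R) ^ Nat.fib (N + 2)
              * R ^ (3 * Nat.fib (N + 2) + Nat.fib (N + 1) + 1)) := by
  set B : Matrix (Fin m) (Fin m) (Quaternion ℝ) := (3 : ℝ) • 1 + R with hB
  have hcomm : Commute R B := by
    have h1 : Commute R ((3:ℝ) • (1 : Matrix (Fin m) (Fin m) (Quaternion ℝ))) :=
      (Commute.one_right R).smul_right 3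
    exact h1.add_right (Commute.refl R)
  have hcomb : ∀ (Y W : Matrix (Fin n) (Fin m) (Quaternion ℝ)),
      1 - A * (W + Y * (1 - A * W)) = (1 - A * Y) * (1 - A * W) := by
    intro Y W
    rw [Matrix.mul_add, ← Matrix.mul_assoc]
    noncomm_ring
  have hBR : ∀ a b c d : ℕ, (B ^ a * R ^ b) * (B ^ c * R ^ d) = B ^ (a+c) * R ^ (b+d) := by
    intro a b c d
    rw [mul_assoc (B^a), ← mul_assoc (R^b), (hcomm.pow_pow b c).eq,
      mul_assoc (B^c), ← mul_assoc (B^a), ← pow_add, ← pow_add]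
  have h4 : ((4:ℝ)) • (1 : Matrix (Fin m) (Fin m) (Quaternion ℝ)) = 4 := by
    rw [← Algebra.algebraMap_eq_smul_one]; exact map_ofNat _ 4
  have h3 : ((3:ℝ)) • (1 : Matrix (Fin m) (Fin m) (Quaternion ℝ)) = 3 := by
    rw [← Algebra.algebraMap_eq_smul_one]; exact map_ofNat _ 3
  have h0 : 1 - A * Z 0 = ((1:ℝ)/4) • (B * R ^ 3) := by
    rw [hZ0, hU, Matrix.mul_smul, ← Matrix.mul_assoc, ← hP]
    have hone : (1 : Matrix (Fin m) (Fin m) (Quaternion ℝ)) = ((1:ℝ)/4) • ((4:ℝ) • 1) := by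
      rw [smul_smul]; norm_num
    rw [hone, ← smul_sub]
    congr 1
    rw [h4, hB, h3, hR]
    noncomm_ring
    norm_num
    abel
  -- general residual product lemma for R * (c • (B^f * R^e))
  have hRS : ∀ (c : ℝ) (f e : ℕ),
      R * (c • (B ^ f * R ^ e)) = c • (B ^ f * R ^ (e + 1)) := by
    intro c f e
    rw [Matrix.mul_smul]
    congr 1
    rw [← mul_assoc, (hcomm.pow_right f).eq, mul_assoc, ← pow_succ']
  have key : ∀ l, 1 - A * Z l =
      (1 / (4:ℝ) ^ Nat.fib (l+1)) • (B ^ Nat.fib (l+1) * R ^ (3 * Nat.fib (l+1) + Nat.fib l)) := by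
    intro l
    induction l using Nat.strong_induction_on with
    | _ l ih =>
      match l with
      | 0 => rw [h0]; norm_num
      | 1 =>
          rw [hZ1, hV, hcomb X U, ← hP, ← hR, ← hZ0, h0,
            show B * R ^ 3 = B ^ 1 * R ^ 3 by rw [pow_one], hRS]
          norm_num
      | (k+2) =>
          rw [hZ k, hcomb (Z k) (Z (k+1)), ih k (by omega), ih (k+1) (by omega)]
          rw [Matrix.smul_mul, Matrix.mul_smul, smul_smul, hBR]
          simp only [show k+1+1 = k+2 from rfl, show k+2+1 = k+3 from rfl]
          have hf1 : Nat.fib (k+3) = Nat.fib (k+1) + Nat.fib (k+2) := Nat.fib_add_two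
          have hf2 : Nat.fib (k+2) = Nat.fib k + Nat.fib (k+1) := Nat.fib_add_two
          congr 1
          · rw [hf1, pow_add]; ring
          · congr 2 <;> omega
  intro N
  rw [hcomb X (Z (N+1)), ← hP, ← hR, key (N+1), hRS]
end

section
/- (Primary factorization of the QHPI19 polynomial Γ.) Let R be an n×n matrix over the real quaternions, and set a₁ = 5(31 + √93)/496, a₂ = (3 + √93)/8, b₁ = 5(31 − √93)/496, b₂ = (3 − √93)/8. Then ∑_{k=0}^{8} R^{2k} = (I + a₁ • R² + a₂ • R⁴ + (1/2) • R⁶ + R⁸) · (I + b₁ • R² + b₂ • R⁴ + (1/2) • R⁶ + R⁸) + (3/8) • R² + (321/1984) • R⁴. -/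
open Matrix Finset

/-- Primary factorization of the QHPI19 polynomial Γ:
`∑_{k=0}^{8} R^{2k} = (I + a₁•R² + a₂•R⁴ + (1/2)•R⁶ + R⁸)(I + b₁•R² + b₂•R⁴ + (1/2)•R⁶ + R⁸)
  + (3/8)•R² + (321/1984)•R⁴`. -/
theorem qhpi19_primary_factorization
    {n : ℕ} (R : Matrix (Fin n) (Fin n) (Quaternion ℝ))
    (a₁ a₂ b₁ b₂ : ℝ)
    (ha₁ : a₁ = 5 * (31 + Real.sqrt 93) / 496)
    (ha₂ : a₂ = (3 + Real.sqrt 93) / 8)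
    (hb₁ : b₁ = 5 * (31 - Real.sqrt 93) / 496)
    (hb₂ : b₂ = (3 - Real.sqrt 93) / 8) :
    ∑ k ∈ Finset.range 9, R ^ (2 * k)
      = (1 + a₁ • R ^ 2 + a₂ • R ^ 4 + (1 / 2 : ℝ) • R ^ 6 + R ^ 8)
          * (1 + b₁ • R ^ 2 + b₂ • R ^ 4 + (1 / 2 : ℝ) • R ^ 6 + R ^ 8)
        + (3 / 8 : ℝ) • R ^ 2 + (321 / 1984 : ℝ) • R ^ 4 := by
  have hs : Real.sqrt 93 ^ 2 = 93 := Real.sq_sqrt (by norm_num)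
  subst ha₁ ha₂ hb₁ hb₂
  set s := Real.sqrt 93 with hsdef
  simp only [Finset.sum_range_succ, Finset.sum_range_zero, mul_add, add_mul, one_mul, mul_one,
    smul_mul_assoc, mul_smul_comm, smul_smul, ← pow_add]
  norm_num
  match_scalars <;> nlinarith [hs]
end

section
/- (Secondary factorization of the first eighth-degree QHPI19 block.) Let R be an n×n matrix over the real quaternions, and set a₁ = 5(31 + √93)/496, a₂ = (3 + √93)/8, d₁ = (1 + √(27 − 2√93))/4, d₂ = (1 − √(27 − 2√93))/4, d₃ = (5√93 − 93)/496. Then I + a₁ • R² + a₂ • R⁴ + (1/2) • R⁶ + R⁸ = (I + d₁ • R² + R⁴) · (I + d₂ • R² + R⁴) + d₃ • R². -/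
open Matrix

/-- Secondary factorization of the first eighth-degree QHPI19 block:
`I + a₁•R² + a₂•R⁴ + (1/2)•R⁶ + R⁸ = (I + d₁•R² + R⁴)(I + d₂•R² + R⁴) + d₃•R²`. -/
theorem qhpi19_secondary_factorization_first
    {n : ℕ} (R : Matrix (Fin n) (Fin n) (Quaternion ℝ))
    (a₁ a₂ d₁ d₂ d₃ : ℝ)
    (ha₁ : a₁ = 5 * (31 + Real.sqrt 93) / 496)
    (ha₂ : a₂ = (3 + Real.sqrt 93) / 8)
    (hd₁ : d₁ = (1 + Real.sqrt (27 - 2 * Real.sqrt 93)) / 4)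
    (hd₂ : d₂ = (1 - Real.sqrt (27 - 2 * Real.sqrt 93)) / 4)
    (hd₃ : d₃ = (5 * Real.sqrt 93 - 93) / 496) :
    1 + a₁ • R ^ 2 + a₂ • R ^ 4 + (1 / 2 : ℝ) • R ^ 6 + R ^ 8
      = (1 + d₁ • R ^ 2 + R ^ 4) * (1 + d₂ • R ^ 2 + R ^ 4) + d₃ • R ^ 2 := by
  have hs : Real.sqrt 93 ^ 2 = 93 := Real.sq_sqrt (by norm_num)
  have ht : Real.sqrt (27 - 2 * Real.sqrt 93) ^ 2 = 27 - 2 * Real.sqrt 93 := by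
    apply Real.sq_sqrt
    nlinarith [Real.sq_sqrt (show (0:ℝ) ≤ 93 by norm_num), Real.sqrt_nonneg 93]
  have e1 : (1 + d₁ • R ^ 2 + R ^ 4) * (1 + d₂ • R ^ 2 + R ^ 4)
      = 1 + (d₁ + d₂) • R ^ 2 + (2 + d₁ * d₂) • R ^ 4 + (d₁ + d₂) • R ^ 6 + R ^ 8 := by
    simp only [mul_add, add_mul, one_mul, mul_one, smul_mul_smul_comm, smul_mul_assoc,
      mul_smul_comm, ← pow_add]
    norm_num
    module
  rw [e1]
  match_scalars <;> subst ha₁ ha₂ hd₁ hd₂ hd₃ <;>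
    nlinarith [hs, ht, Real.sqrt_nonneg 93, Real.sqrt_nonneg (27 - 2 * Real.sqrt 93)]
end
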